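/- (Best-vs-worst social cost ratio can be Ω(√n) on trees.) Let n be a perfect square with n sufficiently large (n≫3), and let T be the tree on n vertices consisting of a path v₀,v₁,…,v_{√n} together with n−√n−1 additional leaves all attached to v_{√n}. Let S(v)=∑_{u∈V} d(u,v) denote the sum of shortest-path distances from all vertices to v. Then S(v₀) = ∑_{i=1}^{√n} i + (√n+1)(n−√n−1) ≥ n√n/2, while S(v_{√n}) = ∑_{i=1}^{√n} i + (n−√n−1) ≤ 2n; hence the ratio of the maximum to the minimum of S over the vertices of T is at least √n/4. -/
import Mathlib


/-- Vertices of the "broom" tree: a path `v₀, …, v_m` (encoded by `Fin (m+1)`)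
together with `t` leaves all attached to the endpoint `v_m`. -/
inductive BroomV (m t : ℕ) where
  | path (i : Fin (m + 1))
  | leaf (j : Fin t)
deriving DecidableEq, Fintype

instance (m t : ℕ) : Nonempty (BroomV m t) := ⟨.path 0⟩

/-- Shortest-path distance in the broom tree. -/
def broomDist (m t : ℕ) : BroomV m t → BroomV m t → ℕ
  | .path i, .path j => ((i : ℤ) - (j : ℤ)).natAbs
  | .path i, .leaf _ => (m - (i : ℕ)) + 1
  | .leaf _, .path i => (m - (i : ℕ)) + 1
  | .leaf a, .leaf b => if a = b then 0 else 2

/-- Social cost of a vertex `v`: sum of shortest-path distances of all voters to `v`. -/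
def broomSC (m t : ℕ) (v : BroomV m t) : ℕ :=
  ∑ u : BroomV m t, broomDist m t u v

def broomEquiv (m t : ℕ) : Fin (m + 1) ⊕ Fin t ≃ BroomV m t where
  toFun := Sum.elim .path .leaf
  invFun := fun v => match v with | .path i => .inl i | .leaf j => .inr j
  left_inv := by rintro (i | j) <;> rfl
  right_inv := by rintro (i | j) <;> rfl

lemma broom_sum (m t : ℕ) (f : BroomV m t → ℕ) :
    ∑ u : BroomV m t, f u = (∑ i : Fin (m + 1), f (.path i)) + ∑ j : Fin t, f (.leaf j) := by
  rw [← (broomEquiv m t).sum_comp f, Fintype.sum_sum_type]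
  rfl

lemma icc_sum (m : ℕ) : ∑ i ∈ Finset.range (m + 1), i = ∑ i ∈ Finset.Icc 1 m, i := by
  induction m with
  | zero => rfl
  | succ k ih => rw [Finset.sum_range_succ, ih, Finset.sum_Icc_succ_top (by omega)]

lemma broomSC_zero (m t : ℕ) :
    broomSC m t (.path ⟨0, by omega⟩) = (∑ i ∈ Finset.Icc 1 m, i) + (m + 1) * t := by
  rw [broomSC, broom_sum]
  congr 1
  · rw [← icc_sum, ← Fin.sum_univ_eq_sum_range (fun i => i)]
    apply Finset.sum_congr rfl
    intro i _
    show ((i : ℤ) - ((⟨0, by omega⟩ : Fin (m + 1)) : ℤ)).natAbs = (i : ℕ)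
    simp only [Fin.val_mk, Nat.cast_zero]
    omega
  · simp [broomDist, Nat.sub_zero, mul_comm]

lemma broomSC_m (m t : ℕ) :
    broomSC m t (.path ⟨m, by omega⟩) = (∑ i ∈ Finset.Icc 1 m, i) + t := by
  rw [broomSC, broom_sum]
  congr 1
  · rw [← icc_sum, ← Finset.sum_range_reflect (fun i => i) (m + 1),
      ← Fin.sum_univ_eq_sum_range (fun i => m + 1 - 1 - i)]
    apply Finset.sum_congr rfl
    intro i _
    show ((i : ℤ) - ((⟨m, by omega⟩ : Fin (m + 1)) : ℤ)).natAbs = m + 1 - 1 - (i : ℕ)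
    have hi : (i : ℕ) < m + 1 := i.isLt
    simp only [Fin.val_mk]
    omega
  · simp [broomDist]

/-- **Best-vs-worst social cost ratio can be `Ω(√n)` on trees.**  Let `n = m²` (so
`m = √n`) be sufficiently large, and let `T` be the broom consisting of a path
`v₀, …, v_m` with `n − m − 1` leaves attached to `v_m` (so `n` vertices in total).
Then `S(v₀) = ∑_{i=1}^{m} i + (m+1)(n−m−1) ≥ n√n/2`, while
`S(v_m) = ∑_{i=1}^{m} i + (n−m−1) ≤ 2n`; hence the ratio of the maximum to the minimum
of `S` over the vertices is at least `√n/4`. -/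
theorem broom_best_worst_ratio (n m : ℕ) (hm : 3 ≤ m) (hn : n = m * m) :
    broomSC m (n - m - 1) (BroomV.path ⟨0, by omega⟩) =
      (∑ i ∈ Finset.Icc 1 m, i) + (m + 1) * (n - m - 1) ∧
    n * m ≤ 2 * broomSC m (n - m - 1) (BroomV.path ⟨0, by omega⟩) ∧
    broomSC m (n - m - 1) (BroomV.path ⟨m, by omega⟩) =
      (∑ i ∈ Finset.Icc 1 m, i) + (n - m - 1) ∧
    broomSC m (n - m - 1) (BroomV.path ⟨m, by omega⟩) ≤ 2 * n ∧
    m * Finset.univ.inf' Finset.univ_nonempty (broomSC m (n - m - 1)) ≤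
      4 * Finset.univ.sup' Finset.univ_nonempty (broomSC m (n - m - 1)) := by
  set t := n - m - 1 with htdef
  have hsum2 : (∑ i ∈ Finset.Icc 1 m, i) * 2 = m * m + m := by
    rw [← icc_sum, Finset.sum_range_id_mul_two]
    simp [Nat.add_sub_cancel, Nat.mul_comm]
    ring
  have hte : t + m + 1 = m * m := by
    have : m + 1 ≤ m * m := by nlinarith
    omega
  have h0 := broomSC_zero m t
  have hM := broomSC_m m t
  have key1 : n * m ≤ 2 * broomSC m t (BroomV.path ⟨0, by omega⟩) := by
    rw [h0, hn]
    nlinarith [hte, hsum2]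
  have key2 : broomSC m t (BroomV.path ⟨m, by omega⟩) ≤ 2 * n := by
    rw [hM, hn]
    nlinarith [hte, hsum2]
  refine ⟨h0, key1, hM, key2, ?_⟩
  have hinf : Finset.univ.inf' Finset.univ_nonempty (broomSC m t) ≤ 2 * n :=
    le_trans (Finset.inf'_le _ (Finset.mem_univ (BroomV.path ⟨m, by omega⟩))) key2
  have hsup : n * m ≤ 2 * Finset.univ.sup' Finset.univ_nonempty (broomSC m t) :=
    le_trans key1 (Nat.mul_le_mul_left 2
      (Finset.le_sup' _ (Finset.mem_univ (BroomV.path ⟨0, by omega⟩))))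
  calc m * Finset.univ.inf' Finset.univ_nonempty (broomSC m t)
      ≤ m * (2 * n) := Nat.mul_le_mul_left m hinf
    _ = 2 * (n * m) := by ring
    _ ≤ 2 * (2 * Finset.univ.sup' Finset.univ_nonempty (broomSC m t)) :=
        Nat.mul_le_mul_left 2 hsup
    _ = 4 * Finset.univ.sup' Finset.univ_nonempty (broomSC m t) := by ring
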